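/- arXiv:1404.3447 — 2 statements merged into one kernel-verified Lean document; each statement's English description precedes it below -/
import Mathlib

section
/- Let G be a finite solvable group, H any finite nontrivial group, and p the smallest prime divisor of gcd(|G|,|H|) such that G has a normal subgroup of index p. If every prime less than p that divides |G| also divides |H|, then Λ_{G,H} ≤ 1/p. -/
/-- An affine homomorphism from `G` to `H` is a function of the form
`g ↦ h * φ₀ g` for a fixed `h : H` and a group homomorphism `φ₀ : G →* H`. -/
def IsAffineHom {G H : Type*} [Group G] [Group H] (φ : G → H) : Prop :=
  ∃ (h : H) (φ₀ : G →* H), ∀ g : G, φ g = h * φ₀ g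

/-- The agreement of two functions `f g : G → H`: the fraction of inputs
on which they agree, `|Eq(f,g)| / |G|`. -/
noncomputable def agr {G H : Type*} (f g : G → H) : ℝ :=
  (Nat.card {x : G // f x = g x} : ℝ) / (Nat.card G : ℝ)

/-- The maximum agreement `Λ_{G,H}`: the maximum of `agr φ ψ` over all pairs of
distinct affine homomorphisms `φ ψ : G → H`. -/
noncomputable def Lambda (G H : Type*) [Group G] [Group H] : ℝ :=
  sSup {r : ℝ | ∃ φ ψ : G → H,
    IsAffineHom φ ∧ IsAffineHom ψ ∧ φ ≠ ψ ∧ r = agr φ ψ}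

/-!
The equalizer of two distinct affine homomorphisms `g ↦ h₁ α g` and `g ↦ h₂ β g` is either
empty or a left coset of the proper subgroup `α.eqLocus β`, so their agreement is at most
`1 / [G : K]` for some proper subgroup `K`. Since `G` acts on `G ⧸ K` through a quotient of order
dividing `[G : K]!`, which is nontrivial and solvable, `G` has a normal subgroup of prime index
`q ≤ [G : K]`; by the hypotheses on `p`, `q < p` is impossible.
-/

open Subgroup

theorem CommGroup.exists_index_prime (A : Type*) [CommGroup A] [Finite A] [Nontrivial A] :
    ∃ M : Subgroup A, M.index.Prime := by
  have : Finite (Subgroup A) := Finite.of_injective _ SetLike.coe_injective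
  obtain ⟨M, hM⟩ := IsCoatomic.exists_coatom (α := Subgroup A)
  have := Set.isSimpleOrder_Ici_iff_isCoatom.mpr hM
  have : IsSimpleOrder (Subgroup (A ⧸ M)) :=
    OrderIso.isSimpleOrder (β := Set.Ici M) (QuotientGroup.comapMk'OrderIso M)
  have : IsSimpleGroup (A ⧸ M) :=
    { toNontrivial := Subgroup.nontrivial_iff.mp inferInstance
      eq_bot_or_eq_top_of_normal := fun N _ => IsSimpleOrder.eq_bot_or_eq_top N }
  exact ⟨M, M.index_eq_card ▸ IsSimpleGroup.prime_card⟩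

theorem Group.IsSolvable.exists_normal_index_prime (G : Type*) [Group G] [Finite G]
    [Nontrivial G] [Group.IsSolvable G] : ∃ N : Subgroup G, N.Normal ∧ N.index.Prime := by
  have : Nontrivial (Abelianization G) :=
    QuotientGroup.nontrivial_iff.mpr (Group.IsSolvable.commutator_lt_top_of_nontrivial G).ne
  obtain ⟨M, hM⟩ := CommGroup.exists_index_prime (Abelianization G)
  refine ⟨M.comap Abelianization.of, M.normal_of_isMulCommutative.comap _, ?_⟩
  rwa [index_comap_of_surjective _ QuotientGroup.mk_surjective]

theorem Subgroup.index_normalCore_dvd_factorial {G : Type*} [Group G] (K : Subgroup G)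
    [K.FiniteIndex] : K.normalCore.index ∣ K.index.factorial := by
  have : Finite (G ⧸ K) := K.finite_quotient_of_finiteIndex
  calc K.normalCore.index
      = Nat.card (MulAction.toPermHom G (G ⧸ K)).range := by rw [K.normalCore_eq_ker, index_ker]
    _ ∣ Nat.card (Equiv.Perm (G ⧸ K)) := card_subgroup_dvd_card _
    _ = K.index.factorial := by rw [Nat.card_perm, index_eq_card]

theorem Subgroup.exists_normal_index_prime_le_index {G : Type*} [Group G] [Finite G]
    [Group.IsSolvable G] {K : Subgroup G} (hK : K ≠ ⊤) :
    ∃ N : Subgroup G, N.Normal ∧ N.index.Prime ∧ N.index ≤ K.index := by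
  have : Nontrivial (G ⧸ K.normalCore) :=
    QuotientGroup.nontrivial_iff.mpr fun h => hK (top_le_iff.mp (h ▸ K.normalCore_le))
  obtain ⟨N, hN, hprime⟩ := Group.IsSolvable.exists_normal_index_prime (G ⧸ K.normalCore)
  have hindex : (N.comap (QuotientGroup.mk' K.normalCore)).index = N.index :=
    index_comap_of_surjective _ (QuotientGroup.mk'_surjective _)
  refine ⟨_, hN.comap _, hindex ▸ hprime, hindex ▸ hprime.dvd_factorial.mp ?_⟩
  calc N.index ∣ Nat.card (G ⧸ K.normalCore) := N.index_dvd_card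
    _ = K.normalCore.index := K.normalCore.index_eq_card.symm
    _ ∣ K.index.factorial := K.index_normalCore_dvd_factorial

section Affine

variable {G H : Type*} [Group G] [Group H]

theorem mul_map_mul_eq_iff {h₁ h₂ : H} {α β : G →* H} {x₀ : G}
    (hx₀ : h₁ * α x₀ = h₂ * β x₀) (y : G) :
    h₁ * α (x₀ * y) = h₂ * β (x₀ * y) ↔ α y = β y := by
  rw [map_mul, map_mul, ← mul_assoc, ← mul_assoc, hx₀, mul_right_inj]

theorem IsAffineHom.agr_eq_zero_or_exists [Finite G] {φ ψ : G → H} (hφ : IsAffineHom φ)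
    (hψ : IsAffineHom ψ) (hne : φ ≠ ψ) :
    agr φ ψ = 0 ∨ ∃ K : Subgroup G, K ≠ ⊤ ∧ agr φ ψ = 1 / K.index := by
  obtain ⟨h₁, α, hφ⟩ := hφ
  obtain ⟨h₂, β, hψ⟩ := hψ
  obtain rfl := funext hφ
  obtain rfl := funext hψ
  by_cases hE : ∃ x₀, h₁ * α x₀ = h₂ * β x₀
  · obtain ⟨x₀, hx₀⟩ := hE
    -- the equalizer is the left coset `x₀ • α.eqLocus β`
    have hcard : Nat.card {x // h₁ * α x = h₂ * β x} = Nat.card (α.eqLocus β) :=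
      Nat.card_congr ((Equiv.mulLeft x₀).subtypeEquiv fun y => (mul_map_mul_eq_iff hx₀ y).symm).symm
    refine .inr ⟨α.eqLocus β, fun htop => hne (funext fun x => ?_), ?_⟩
    · simpa using (mul_map_mul_eq_iff hx₀ (x₀⁻¹ * x)).mpr ((eq_top_iff' _).mp htop _)
    · rw [agr, hcard, ← (α.eqLocus β).card_mul_index, Nat.cast_mul,
        div_mul_cancel_left₀ (Nat.cast_ne_zero.mpr Nat.card_pos.ne'), one_div]
  · have : IsEmpty {x // h₁ * α x = h₂ * β x} := ⟨fun x => hE ⟨x.1, x.2⟩⟩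
    simp [agr]

theorem Lambda_le_one_div_of_le_index [Finite G] {n : ℕ} (hn : 0 < n)
    (h : ∀ K : Subgroup G, K ≠ ⊤ → n ≤ K.index) : Lambda G H ≤ 1 / n := by
  refine Real.sSup_le ?_ (by positivity)
  rintro _ ⟨φ, ψ, hφ, hψ, hne, rfl⟩
  obtain h0 | ⟨K, hK, hagr⟩ := hφ.agr_eq_zero_or_exists hψ hne
  · rw [h0]; positivity
  · rw [hagr]
    exact one_div_le_one_div_of_le (by exact_mod_cast hn) (by exact_mod_cast h K hK)

end Affine

theorem solvable_dividing_lambda_upper_general (G H : Type*) [Group G] [Group H]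
    [Finite G] [Group.IsSolvable G]
    (p : ℕ) (hp : p.Prime)
    (hmin : ∀ q : ℕ, q.Prime → q ∣ Nat.gcd (Nat.card G) (Nat.card H) →
      (∃ K : Subgroup G, K.Normal ∧ K.index = q) → p ≤ q)
    (hdiv : ∀ q : ℕ, q.Prime → q < p → q ∣ Nat.card G → q ∣ Nat.card H) :
    Lambda G H ≤ 1 / (p : ℝ) := by
  refine Lambda_le_one_div_of_le_index hp.pos fun K hK => ?_
  obtain ⟨N, hN, hprime, hle⟩ := K.exists_normal_index_prime_le_index hK
  by_contra! hKp
  have hNp : N.index < p := hle.trans_lt hKp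
  have hG : N.index ∣ Nat.card G := N.index_dvd_card
  have hH : N.index ∣ Nat.card H := hdiv _ hprime hNp hG
  exact (hmin _ hprime (Nat.dvd_gcd hG hH) ⟨N, hN, rfl⟩).not_gt hNp

theorem solvable_dividing_lambda_upper (G H : Type*) [Group G] [Group H]
    [Finite G] [Finite H] [Nontrivial H] [Group.IsSolvable G]
    (p : ℕ) (hp : p.Prime) (hdvd : p ∣ Nat.gcd (Nat.card G) (Nat.card H))
    (hex : ∃ K : Subgroup G, K.Normal ∧ K.index = p)
    (hmin : ∀ q : ℕ, q.Prime → q ∣ Nat.gcd (Nat.card G) (Nat.card H) →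
      (∃ K : Subgroup G, K.Normal ∧ K.index = q) → p ≤ q)
    (hdiv : ∀ q : ℕ, q.Prime → q < p → q ∣ Nat.card G → q ∣ Nat.card H) :
    Lambda G H ≤ 1 / (p : ℝ) :=
  solvable_dividing_lambda_upper_general G H p hp hmin hdiv
end

section
/- If G and H are nontrivial finite groups and N is a normal subgroup of G, then Λ_{G,H} ≥ Λ_{G/N,H}. -/
lemma agr_nonneg {G H : Type*} (f g : G → H) : 0 ≤ agr f g := by
  unfold agr; positivity

lemma lambda_bddAbove (G H : Type*) [Group G] [Group H] [Finite G] :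
    BddAbove {r : ℝ | ∃ φ ψ : G → H,
      IsAffineHom φ ∧ IsAffineHom ψ ∧ φ ≠ ψ ∧ r = agr φ ψ} := by
  refine ⟨1, ?_⟩
  rintro r ⟨φ, ψ, -, -, -, rfl⟩
  unfold agr
  have h0 : 0 < (Nat.card G : ℝ) := by
    exact_mod_cast Nat.card_pos
  rw [div_le_one h0]
  exact_mod_cast Nat.card_le_card_of_injective (Subtype.val : {x : G // φ x = ψ x} → G)
    Subtype.val_injective

lemma lambda_nonneg (G H : Type*) [Group G] [Group H] [Finite G] [Nontrivial H] :
    0 ≤ Lambda G H := by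
  obtain ⟨a, b, hab⟩ := exists_pair_ne H
  have hmem : agr (fun _ : G => a) (fun _ : G => b) ∈ {r : ℝ | ∃ φ ψ : G → H,
      IsAffineHom φ ∧ IsAffineHom ψ ∧ φ ≠ ψ ∧ r = agr φ ψ} := by
    refine ⟨_, _, ⟨a, 1, by simp⟩, ⟨b, 1, by simp⟩, ?_, rfl⟩
    intro h
    exact hab (congrFun h 1)
  exact le_trans (agr_nonneg _ _) (le_csSup (lambda_bddAbove G H) hmem)

theorem quotient_lambda (G H : Type*) [Group G] [Group H]
    [Finite G] [Finite H] [Nontrivial G] [Nontrivial H]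
    (N : Subgroup G) [N.Normal] :
    Lambda G H ≥ Lambda (G ⧸ N) H := by
  have hbdd := lambda_bddAbove G H
  refine Real.sSup_le ?_ (lambda_nonneg G H)
  rintro r ⟨φ, ψ, ⟨h, φ₀, hφ⟩, ⟨k, ψ₀, hψ⟩, hne, rfl⟩
  set π : G →* G ⧸ N := QuotientGroup.mk' N
  have hπ : Function.Surjective π := QuotientGroup.mk'_surjective N
  have hmem : agr (φ ∘ π) (ψ ∘ π) ∈ {r : ℝ | ∃ φ ψ : G → H,
      IsAffineHom φ ∧ IsAffineHom ψ ∧ φ ≠ ψ ∧ r = agr φ ψ} := by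
    refine ⟨_, _, ⟨h, φ₀.comp π, fun g => hφ (π g)⟩, ⟨k, ψ₀.comp π, fun g => hψ (π g)⟩, ?_, rfl⟩
    intro heq
    apply hne
    funext y
    obtain ⟨x, rfl⟩ := hπ y
    exact congrFun heq x
  have hcount : agr (φ ∘ π) (ψ ∘ π) = agr φ ψ := by
    unfold agr
    set t : Set (G ⧸ N) := {y | φ y = ψ y} with ht
    have e1 : {x : G // (φ ∘ π) x = (ψ ∘ π) x} ≃ (QuotientGroup.mk ⁻¹' t : Set G) :=
      Equiv.refl _
    have e2 := QuotientGroup.preimageMkEquivSubgroupProdSet N t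
    have hc1 : Nat.card {x : G // (φ ∘ π) x = (ψ ∘ π) x}
        = Nat.card N * Nat.card t := by
      rw [Nat.card_congr (e1.trans e2), Nat.card_prod]
    have hc2 : Nat.card G = Nat.card (G ⧸ N) * Nat.card N :=
      Subgroup.card_eq_card_quotient_mul_card_subgroup N
    have htc : Nat.card {y : G ⧸ N // φ y = ψ y} = Nat.card t := rfl
    rw [hc1, hc2, htc]
    have hN : (0 : ℝ) < Nat.card N := by exact_mod_cast Nat.card_pos
    have hQ : (0 : ℝ) < Nat.card (G ⧸ N) := by exact_mod_cast Nat.card_pos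
    push_cast
    field_simp
  rw [← hcount]
  exact le_csSup hbdd hmem
end
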